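/- Let 1 < c < 37/18 with c ≠ 2. Then ∫_{−τ}^{τ} |S(x)|⁴ dx ≪ X^{4−c} (log X)⁵ and ∫_{−τ}^{τ} |I(x)|⁴ dx ≪ X^{4−c} (log X)⁵, where the implied constants depend only on c and η. -/

import Mathlib

open MeasureTheory

noncomputable def e (t : ℝ) : ℂ := Complex.exp (2 * Real.pi * Complex.I * t)

/-- The exponential sum `S(x) = Σ_{X/2 < p ≤ X} (log p) e(p^c x)` over primes. -/
noncomputable def S (X c : ℝ) (x : ℝ) : ℂ :=
  ∑ p ∈ (Finset.range (⌈X⌉₊ + 1)).filter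
      (fun p : ℕ => p.Prime ∧ X / 2 < (p : ℝ) ∧ (p : ℝ) ≤ X),
    (Real.log p : ℂ) * e ((p : ℝ) ^ c * x)

/-- The integral `I(x) = ∫_{X/2}^X e(t^c x) dt`. -/
noncomputable def I (X c : ℝ) (x : ℝ) : ℂ := ∫ t in (X / 2)..X, e (t ^ c * x)

lemma norm_e (t : ℝ) : ‖e t‖ = 1 := by
  unfold e
  rw [Complex.norm_exp]
  have : (2 * ↑Real.pi * Complex.I * ↑t).re = 0 := by simp [Complex.mul_re, Complex.mul_im]
  simp [this]

lemma continuous_e (θ : ℝ) : Continuous fun x : ℝ => e (θ * x) := by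
  unfold e; fun_prop

lemma e_eq (θ x : ℝ) : e (θ * x) = Complex.exp ((2 * Real.pi * Complex.I * θ) * x) := by
  unfold e; push_cast; ring_nf

lemma J_le_tau (τ θ : ℝ) (hτ : 0 ≤ τ) : ‖∫ x in (-τ)..τ, e (θ * x)‖ ≤ 2 * τ := by
  have := intervalIntegral.norm_integral_le_of_norm_le_const
    (C := 1) (f := fun x : ℝ => e (θ * x)) (a := -τ) (b := τ)
    (fun x _ => le_of_eq (norm_e _))
  calc ‖∫ x in (-τ)..τ, e (θ * x)‖ ≤ 1 * |τ - (-τ)| := this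
    _ = 2 * τ := by rw [abs_of_nonneg (by linarith : (0:ℝ) ≤ τ - -τ)]; ring

lemma J_le_inv (τ θ : ℝ) (hθ : θ ≠ 0) :
    ‖∫ x in (-τ)..τ, e (θ * x)‖ ≤ 1 / (Real.pi * |θ|) := by
  have hc : (2 * Real.pi * Complex.I * θ : ℂ) ≠ 0 := by
    refine mul_ne_zero (mul_ne_zero (mul_ne_zero two_ne_zero ?_) Complex.I_ne_zero) ?_
    · exact_mod_cast Complex.ofReal_ne_zero.mpr Real.pi_ne_zero
    · exact Complex.ofReal_ne_zero.mpr hθ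
  have h1 : (∫ x in (-τ)..τ, e (θ * x)) =
      (Complex.exp ((2 * Real.pi * Complex.I * θ) * τ) -
        Complex.exp ((2 * Real.pi * Complex.I * θ) * (-τ))) / (2 * Real.pi * Complex.I * θ) := by
    simp_rw [e_eq]
    rw [integral_exp_mul_complex hc]
    norm_num
  rw [h1, norm_div]
  have h2 : ‖(2 * Real.pi * Complex.I * θ : ℂ)‖ = 2 * Real.pi * |θ| := by
    simp [norm_mul, Complex.norm_real, Real.norm_eq_abs, abs_of_pos Real.pi_pos]
  rw [h2]
  have h3 : ‖Complex.exp ((2 * Real.pi * Complex.I * θ) * τ) -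
      Complex.exp ((2 * Real.pi * Complex.I * θ) * (-τ))‖ ≤ 2 := by
    refine (norm_sub_le _ _).trans ?_
    have e1 : ∀ s : ℝ, ‖Complex.exp ((2 * Real.pi * Complex.I * θ) * s)‖ = 1 := by
      intro s; rw [← e_eq, norm_e]
    have h4 := e1 τ
    have h5 := e1 (-τ)
    push_cast at h5
    rw [h4, h5]; norm_num
  have hpos : (0:ℝ) < 2 * Real.pi * |θ| := by positivity
  calc _ ≤ 2 / (2 * Real.pi * |θ|) := by gcongr
    _ = 1 / (Real.pi * |θ|) := by rw [div_eq_div_iff hpos.ne' (by positivity)]; ring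

lemma e_mul_conj (u v : ℝ) : e u * (starRingEnd ℂ) (e v) = e (u - v) := by
  unfold e
  rw [← Complex.exp_conj, ← Complex.exp_add]
  ring_nf
  congr 1
  simp [Complex.ext_iff, Complex.mul_re, Complex.mul_im]
  ring_nf


lemma rpow_gap {s t c : ℝ} (hs : 0 < s) (hst : s ≤ t) (hc : 1 ≤ c) :
    s ^ (c - 1) * (t - s) ≤ t ^ c - s ^ c := by
  have ht : 0 < t := lt_of_lt_of_le hs hst
  have h1 : t / s ≤ (t / s) ^ c := by
    have hts : 1 ≤ t / s := (one_le_div hs).mpr hst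
    calc t / s = (t / s) ^ (1:ℝ) := (Real.rpow_one _).symm
      _ ≤ (t / s) ^ c := Real.rpow_le_rpow_of_exponent_le hts hc
  have h2 : (t / s) ^ c = t ^ c / s ^ c := Real.div_rpow ht.le hs.le c
  have hsc : 0 < s ^ c := Real.rpow_pos_of_pos hs c
  have h3 : t / s * s ^ c ≤ t ^ c := by
    rw [h2] at h1
    calc t / s * s ^ c ≤ t ^ c / s ^ c * s ^ c := by gcongr
      _ = t ^ c := div_mul_cancel₀ _ hsc.ne'
  have h5 : s ^ (c-1) * s = s ^ c := by
    rw [← Real.rpow_add_one hs.ne', sub_add_cancel]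
  have h4 : t / s * s ^ c = t * s ^ (c - 1) := by
    field_simp
    rw [← h5]; ring
  nlinarith [Real.rpow_pos_of_pos hs (c-1)]

lemma sum_inv_dist (N p : ℕ) (hp : p ≤ N) (t : Finset ℕ) (ht : t ⊆ Finset.range (N + 1)) :
    ∑ q ∈ t.erase p, 1 / |(p : ℝ) - q| ≤ 2 * (1 + Real.log N) := by
  classical
  have key : ∀ u : Finset ℕ, (∀ q ∈ u, q ≠ p ∧ q ≤ N) →
      (∀ q ∈ u, q < p) ∨ (∀ q ∈ u, p < q) →
      ∑ q ∈ u, 1 / |(p : ℝ) - q| ≤ 1 + Real.log N := by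
    intro u hu hmono
    set g : ℕ → ℕ := fun q => if q < p then p - q else q - p with hg
    have hinj : ∀ a ∈ u, ∀ b ∈ u, g a = g b → a = b := by
      intro a ha b hb hab
      rcases hmono with h | h
      · have h1 := h a ha; have h2 := h b hb
        simp only [hg, if_pos h1, if_pos h2] at hab; omega
      · have h1 := h a ha; have h2 := h b hb
        simp only [hg, if_neg (by omega : ¬ a < p), if_neg (by omega : ¬ b < p)] at hab; omega
    have himg : Finset.image g u ⊆ Finset.Icc 1 N := by
      intro d hd
      simp only [Finset.mem_image] at hd
      obtain ⟨q, hq, rfl⟩ := hd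
      obtain ⟨hne, hqN⟩ := hu q hq
      simp only [Finset.mem_Icc, hg]
      split <;> omega
    have step : ∑ q ∈ u, 1 / |(p : ℝ) - q| = ∑ d ∈ Finset.image g u, 1 / (d : ℝ) := by
      rw [Finset.sum_image hinj]
      apply Finset.sum_congr rfl
      intro q hq
      obtain ⟨hne, _⟩ := hu q hq
      congr 1
      rcases lt_or_gt_of_ne hne with h | h
      · have hc : (q:ℝ) < p := by exact_mod_cast h
        rw [hg]; simp only [if_pos h]
        rw [Nat.cast_sub h.le, abs_of_pos (by linarith)]
      · have hc : (p:ℝ) < q := by exact_mod_cast h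
        rw [hg]; simp only [if_neg (not_lt.mpr h.le)]
        rw [Nat.cast_sub h.le, abs_of_neg (by linarith)]
        ring
    refine le_of_le_of_eq (le_of_eq step) rfl |>.trans ?_
    calc ∑ d ∈ Finset.image g u, 1 / (d:ℝ) ≤ ∑ d ∈ Finset.Icc 1 N, 1 / (d:ℝ) := by
          apply Finset.sum_le_sum_of_subset_of_nonneg himg
          intro i _ _; positivity
      _ = (harmonic N : ℝ) := by
          rw [harmonic_eq_sum_Icc]; push_cast; simp [one_div]
      _ ≤ 1 + Real.log N := harmonic_le_one_add_log N
  have hsplit := Finset.sum_filter_add_sum_filter_not (t.erase p)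
    (fun q => q < p) (fun q => 1 / |(p : ℝ) - q|)
  have hq1 : ∀ q ∈ (t.erase p).filter (fun q => q < p), q ≠ p ∧ q ≤ N := by
    intro q hq
    simp only [Finset.mem_filter, Finset.mem_erase] at hq
    have := ht hq.1.2
    simp only [Finset.mem_range] at this
    exact ⟨hq.1.1, by omega⟩
  have hq2 : ∀ q ∈ (t.erase p).filter (fun q => ¬ q < p), q ≠ p ∧ q ≤ N := by
    intro q hq
    simp only [Finset.mem_filter, Finset.mem_erase] at hq
    have := ht hq.1.2
    simp only [Finset.mem_range] at this
    exact ⟨hq.1.1, by omega⟩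
  have k1 := key _ hq1 (Or.inl (by intro q hq; exact (Finset.mem_filter.mp hq).2))
  have k2 := key _ hq2 (Or.inr (by
    intro q hq
    have h := Finset.mem_filter.mp hq
    have := hq2 q hq
    omega))
  linarith

lemma J_off {c X τ : ℝ} (hc1 : 1 < c) (hX : 16 ≤ X) {p q : ℕ}
    (hp1 : X / 2 < (p:ℝ)) (hq1 : X / 2 < (q:ℝ)) (hne : p ≠ q) :
    ‖∫ x in (-τ)..τ, e (((p:ℝ) ^ c - (q:ℝ) ^ c) * x)‖ ≤ (X/2) ^ (1-c) * (1 / |(p:ℝ) - q|) := by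
  have hX2 : (0:ℝ) < X / 2 := by linarith
  have hd0 : (0:ℝ) < |(p:ℝ) - q| := by
    rw [abs_pos, sub_ne_zero]
    exact_mod_cast hne
  have hgap : (X/2) ^ (c-1) * |(p:ℝ) - q| ≤ |(p:ℝ) ^ c - (q:ℝ) ^ c| := by
    have key : ∀ a b : ℕ, X / 2 < (a:ℝ) → (a:ℝ) < b →
        (X/2) ^ (c-1) * ((b:ℝ) - a) ≤ (b:ℝ) ^ c - (a:ℝ) ^ c := by
      intro a b ha hab
      have h1 := rpow_gap (lt_trans hX2 ha) hab.le hc1.le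
      have h2 : (X/2) ^ (c-1) ≤ (a:ℝ) ^ (c-1) :=
        Real.rpow_le_rpow hX2.le (le_of_lt ha) (by linarith)
      nlinarith
    have hrp0 : (0:ℝ) < (X/2) ^ (c-1) := Real.rpow_pos_of_pos hX2 _
    rcases lt_or_gt_of_ne hne with h | h
    · have hpq : (p:ℝ) < q := by exact_mod_cast h
      have := key p q hp1 hpq
      have hcc : (p:ℝ)^c < (q:ℝ)^c := by nlinarith
      rw [abs_of_neg (show (p:ℝ) - q < 0 by linarith),
        abs_of_neg (show (p:ℝ)^c - (q:ℝ)^c < 0 by linarith)]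
      linarith
    · have hqp : (q:ℝ) < p := by exact_mod_cast h
      have := key q p hq1 hqp
      have hcc : (q:ℝ)^c < (p:ℝ)^c := by nlinarith
      rw [abs_of_pos (show (0:ℝ) < (p:ℝ) - q by linarith),
        abs_of_pos (show (0:ℝ) < (p:ℝ)^c - (q:ℝ)^c by linarith)]
      linarith
  have hrp : (0:ℝ) < (X/2) ^ (c-1) := Real.rpow_pos_of_pos hX2 _
  have hθ0 : (0:ℝ) < |(p:ℝ) ^ c - (q:ℝ) ^ c| := lt_of_lt_of_le (by positivity) hgap
  have hθ : (p:ℝ) ^ c - (q:ℝ) ^ c ≠ 0 := by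
    intro h; rw [h] at hθ0; simp at hθ0
  calc ‖∫ x in (-τ)..τ, e (((p:ℝ) ^ c - (q:ℝ) ^ c) * x)‖
      ≤ 1 / (Real.pi * |(p:ℝ) ^ c - (q:ℝ) ^ c|) := J_le_inv τ _ hθ
    _ ≤ 1 / (1 * ((X/2) ^ (c-1) * |(p:ℝ) - q|)) := by
        apply one_div_le_one_div_of_le (by positivity)
        calc 1 * ((X/2) ^ (c-1) * |(p:ℝ) - q|) ≤ 1 * |(p:ℝ) ^ c - (q:ℝ) ^ c| := by
              rw [one_mul, one_mul]; exact hgap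
          _ ≤ Real.pi * |(p:ℝ) ^ c - (q:ℝ) ^ c| := by
              have := Real.pi_gt_three; nlinarith
    _ = (X/2) ^ (1-c) * (1 / |(p:ℝ) - q|) := by
        have h1 : (X/2:ℝ) ^ (1-c) = ((X/2) ^ (c-1))⁻¹ := by
          rw [show (1-c) = -(c-1) by ring, Real.rpow_neg hX2.le]
        rw [h1]
        field_simp

set_option maxHeartbeats 1000000 in
lemma S_L2 {c X η τ : ℝ} (hc1 : 1 < c) (hc3 : c ≤ 3) (hη : 0 < η) (hη1 : η < 1)
    (hX : 16 ≤ X) (hτ : τ = X ^ (1 - c - η)) :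
    ∫ x in (-τ)..τ, ‖S X c x‖ ^ 2 ≤ 100 * X ^ (2 - c) * Real.log X ^ 3 := by
  have hX0 : (0:ℝ) < X := by linarith
  have hX1 : (1:ℝ) ≤ X := by linarith
  have hlog : 1 ≤ Real.log X := by
    rw [Real.le_log_iff_exp_le hX0]
    calc Real.exp 1 ≤ Real.exp 1 := le_refl _
      _ ≤ 3 := by nlinarith [Real.exp_one_lt_d9]
      _ ≤ X := by linarith
  have hτ0 : 0 ≤ τ := by rw [hτ]; positivity
  set F := (Finset.range (⌈X⌉₊ + 1)).filter
      (fun p : ℕ => p.Prime ∧ X / 2 < (p : ℝ) ∧ (p : ℝ) ≤ X) with hF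
  set l : ℕ → ℝ := fun p => Real.log p with hl
  set α : ℕ → ℝ := fun p => (p:ℝ) ^ c with hα
  set J : ℝ → ℂ := fun θ => ∫ x in (-τ)..τ, e (θ * x) with hJ
  -- basic facts about members of F
  have hmem : ∀ p ∈ F, X / 2 < (p:ℝ) ∧ (p:ℝ) ≤ X ∧ 0 ≤ l p ∧ l p ≤ Real.log X := by
    intro p hp
    rw [hF, Finset.mem_filter] at hp
    obtain ⟨-, -, h1, h2⟩ := hp
    have hp1 : (1:ℝ) ≤ p := by
      have : (0:ℝ) < p := by linarith
      exact_mod_cast Nat.one_le_cast.mpr (by exact_mod_cast this)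
    refine ⟨h1, h2, Real.log_nonneg hp1, Real.log_le_log (by linarith) h2⟩
  -- step: the integral identity
  have hint : ∀ θ : ℝ, IntervalIntegrable (fun x => ((l 0 : ℝ):ℂ) * e (θ * x)) volume (-τ) τ :=
    fun θ => (Continuous.intervalIntegrable (by exact continuous_const.mul (continuous_e θ)) _ _)
  have key : ((∫ x in (-τ)..τ, ‖S X c x‖ ^ 2 : ℝ) : ℂ) =
      ∑ p ∈ F, ∑ q ∈ F, ((l p * l q : ℝ) : ℂ) * J (α p - α q) := by
    rw [← intervalIntegral.integral_ofReal]
    have hptwise : ∀ x : ℝ, ((‖S X c x‖ ^ 2 : ℝ) : ℂ) =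
        ∑ p ∈ F, ∑ q ∈ F, ((l p * l q : ℝ) : ℂ) * e ((α p - α q) * x) := by
      intro x
      have h1 : ((‖S X c x‖ ^ 2 : ℝ) : ℂ) = S X c x * (starRingEnd ℂ) (S X c x) := by
        rw [Complex.mul_conj]
        norm_cast
        rw [Complex.normSq_eq_norm_sq]
      rw [h1]
      show (∑ p ∈ F, (Real.log p : ℂ) * e ((p:ℝ) ^ c * x)) *
        (starRingEnd ℂ) (∑ q ∈ F, (Real.log q : ℂ) * e ((q:ℝ) ^ c * x)) = _
      rw [map_sum, Finset.sum_mul_sum]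
      refine Finset.sum_congr rfl fun p _ => Finset.sum_congr rfl fun q _ => ?_
      rw [map_mul, Complex.conj_ofReal]
      have hrearr : (↑(Real.log p) : ℂ) * e ((p:ℝ) ^ c * x) *
          ((↑(Real.log q) : ℂ) * (starRingEnd ℂ) (e ((q:ℝ) ^ c * x))) =
          ((l p * l q : ℝ) : ℂ) * (e ((p:ℝ) ^ c * x) * (starRingEnd ℂ) (e ((q:ℝ) ^ c * x))) := by
        rw [Complex.ofReal_mul]; ring
      rw [hrearr, e_mul_conj,
        show (p:ℝ) ^ c * x - (q:ℝ) ^ c * x = (α p - α q) * x by rw [hα]; ring]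
    simp_rw [hptwise]
    rw [intervalIntegral.integral_finset_sum]
    · refine Finset.sum_congr rfl fun p _ => ?_
      rw [intervalIntegral.integral_finset_sum]
      · refine Finset.sum_congr rfl fun q _ => ?_
        rw [intervalIntegral.integral_const_mul]
      · intro q _
        exact Continuous.intervalIntegrable (continuous_const.mul (continuous_e _)) _ _
    · intro p _
      apply Continuous.intervalIntegrable
      exact continuous_finset_sum _ fun q _ => continuous_const.mul (continuous_e _)
  -- bound by sum of norms
  have hre : ∫ x in (-τ)..τ, ‖S X c x‖ ^ 2 ≤
      ∑ p ∈ F, ∑ q ∈ F, (l p * l q) * ‖J (α p - α q)‖ := by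
    have h1 : (∫ x in (-τ)..τ, ‖S X c x‖ ^ 2 : ℝ) =
        (∑ p ∈ F, ∑ q ∈ F, ((l p * l q : ℝ) : ℂ) * J (α p - α q)).re := by
      rw [← key, Complex.ofReal_re]
    rw [h1]
    calc (∑ p ∈ F, ∑ q ∈ F, ((l p * l q : ℝ) : ℂ) * J (α p - α q)).re
        ≤ ‖∑ p ∈ F, ∑ q ∈ F, ((l p * l q : ℝ) : ℂ) * J (α p - α q)‖ := Complex.re_le_norm _
      _ ≤ ∑ p ∈ F, ‖∑ q ∈ F, ((l p * l q : ℝ) : ℂ) * J (α p - α q)‖ := norm_sum_le _ _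
      _ ≤ ∑ p ∈ F, ∑ q ∈ F, ‖((l p * l q : ℝ) : ℂ) * J (α p - α q)‖ := by
          exact Finset.sum_le_sum fun p _ => norm_sum_le _ _
      _ = ∑ p ∈ F, ∑ q ∈ F, (l p * l q) * ‖J (α p - α q)‖ := by
          refine Finset.sum_congr rfl fun p hp => Finset.sum_congr rfl fun q hq => ?_
          rw [norm_mul, Complex.norm_real, Real.norm_eq_abs,
            abs_of_nonneg (mul_nonneg (hmem p hp).2.2.1 (hmem q hq).2.2.1)]
  -- counting estimates
  set N := ⌈X⌉₊ with hNdef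
  set L := Real.log X with hL
  have hL1 : 1 ≤ L := hlog
  have hFsub : F ⊆ Finset.range (N + 1) := Finset.filter_subset _ _
  have hcard : (F.card : ℝ) ≤ 2 * X := by
    have h1 : F.card ≤ N + 1 :=
      le_of_le_of_eq (Finset.card_le_card hFsub) (Finset.card_range _)
    have h2 : (N:ℝ) < X + 1 := Nat.ceil_lt_add_one (by linarith)
    have h3 : (F.card : ℝ) ≤ (N:ℝ) + 1 := by exact_mod_cast h1
    linarith
  have hNlog : 1 + Real.log N ≤ 3 * L := by
    have hN16 : (16:ℝ) ≤ (N:ℝ) := le_trans hX (Nat.le_ceil X)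
    have h2 : (N:ℝ) ≤ X + 1 := le_of_lt (Nat.ceil_lt_add_one (by linarith))
    have h3 : Real.log N ≤ Real.log (X + 1) := Real.log_le_log (by linarith) h2
    have h4 : Real.log (X + 1) ≤ Real.log (X ^ (2:ℕ)) :=
      Real.log_le_log (by linarith) (by nlinarith)
    have h5 : Real.log (X ^ (2:ℕ)) = 2 * L := by rw [Real.log_pow]; push_cast; ring
    linarith
  have hNlog0 : 0 ≤ Real.log N := Real.log_nonneg (by
    have : (16:ℝ) ≤ (N:ℝ) := le_trans hX (Nat.le_ceil X); linarith)
  set A := X ^ (1-c) with hA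
  have hA0 : (0:ℝ) ≤ A := Real.rpow_nonneg hX0.le _
  have hτle : τ ≤ A := by
    rw [hτ, hA]; exact Real.rpow_le_rpow_of_exponent_le hX1 (by linarith)
  have hhalf : (X/2) ^ (1-c) ≤ 4 * A := by
    have e1 : (X/2) ^ (1-c) = X ^ (1-c) / 2 ^ (1-c) := Real.div_rpow hX0.le (by norm_num) _
    have e2 : (2:ℝ) ^ (1-c) = ((2:ℝ) ^ (c-1))⁻¹ := by
      rw [show (1-c) = -(c-1) by ring, Real.rpow_neg (by norm_num : (0:ℝ) ≤ 2)]
    have e3 : (2:ℝ) ^ (c-1) ≤ 4 := by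
      have h4 : (2:ℝ) ^ (c-1) ≤ (2:ℝ) ^ ((2:ℕ):ℝ) :=
        Real.rpow_le_rpow_of_exponent_le (by norm_num) (by push_cast; linarith)
      rw [Real.rpow_natCast] at h4
      norm_num at h4
      exact h4
    rw [e1, e2, div_eq_mul_inv, inv_inv]
    nlinarith [hA0, e3]
  have hXX : X * A = X ^ (2-c) := by
    rw [hA, show (2-c) = 1 + (1-c) by ring, Real.rpow_add hX0, Real.rpow_one]
  -- per-p bound
  set D : ℝ := L^2 * (2*τ) + L^2 * ((X/2) ^ (1-c) * (2*(1 + Real.log N))) with hD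
  have per_p : ∀ p ∈ F, ∑ q ∈ F, (l p * l q) * ‖J (α p - α q)‖ ≤ D := by
    intro p hp
    obtain ⟨hp1, hp2, hp3, hp4⟩ := hmem p hp
    have hpN : p ≤ N := by
      have := hFsub hp
      simp only [Finset.mem_range] at this
      omega
    rw [← Finset.add_sum_erase F _ hp]
    have hdiag : (l p * l p) * ‖J (α p - α p)‖ ≤ L^2 * (2*τ) := by
      rw [sub_self]
      have hJ0 : ‖J 0‖ ≤ 2*τ := J_le_tau τ 0 hτ0
      calc l p * l p * ‖J 0‖ ≤ L * L * (2*τ) :=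
            mul_le_mul (mul_le_mul hp4 hp4 hp3 (le_trans hp3 hp4)) hJ0 (norm_nonneg _)
              (by positivity)
        _ = L^2 * (2*τ) := by ring
    have hoff : ∑ q ∈ F.erase p, (l p * l q) * ‖J (α p - α q)‖ ≤
        L^2 * ((X/2) ^ (1-c) * (2*(1 + Real.log N))) := by
      have hterm : ∀ q ∈ F.erase p, (l p * l q) * ‖J (α p - α q)‖ ≤
          L^2 * ((X/2) ^ (1-c) * (1/|(p:ℝ) - q|)) := by
        intro q hq
        have hqF := Finset.mem_of_mem_erase hq
        have hne : p ≠ q := (Finset.ne_of_mem_erase hq).symm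
        obtain ⟨hq1, hq2, hq3, hq4⟩ := hmem q hqF
        have hJoff : ‖J (α p - α q)‖ ≤ (X/2) ^ (1-c) * (1/|(p:ℝ) - q|) :=
          J_off hc1 hX hp1 hq1 hne
        have hll : l p * l q ≤ L^2 := by nlinarith
        exact mul_le_mul hll hJoff (norm_nonneg _) (by positivity)
      have hhp : (0:ℝ) < (X/2) ^ (1-c) := Real.rpow_pos_of_pos (by linarith) _
      calc ∑ q ∈ F.erase p, (l p * l q) * ‖J (α p - α q)‖
          ≤ ∑ q ∈ F.erase p, L^2 * ((X/2) ^ (1-c) * (1/|(p:ℝ) - q|)) :=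
            Finset.sum_le_sum hterm
        _ = L^2 * ((X/2) ^ (1-c) * ∑ q ∈ F.erase p, 1/|(p:ℝ) - q|) := by
            rw [← Finset.mul_sum, ← Finset.mul_sum]
        _ ≤ L^2 * ((X/2) ^ (1-c) * (2*(1 + Real.log N))) := by
            have hsum := sum_inv_dist N p hpN F hFsub
            exact mul_le_mul_of_nonneg_left
              (mul_le_mul_of_nonneg_left hsum hhp.le) (sq_nonneg L)
    rw [hD]
    exact add_le_add hdiag hoff
  have hD0 : 0 ≤ D := by
    rw [hD]
    have hhp : (0:ℝ) ≤ (X/2) ^ (1-c) := Real.rpow_nonneg (by linarith) _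
    have : (0:ℝ) ≤ 1 + Real.log N := by linarith
    positivity
  have total : ∑ p ∈ F, ∑ q ∈ F, (l p * l q) * ‖J (α p - α q)‖ ≤ 2 * X * D := by
    calc ∑ p ∈ F, ∑ q ∈ F, (l p * l q) * ‖J (α p - α q)‖ ≤ ∑ _p ∈ F, D :=
          Finset.sum_le_sum per_p
      _ = (F.card : ℝ) * D := by rw [Finset.sum_const, nsmul_eq_mul]
      _ ≤ 2 * X * D := mul_le_mul_of_nonneg_right hcard hD0
  -- numeric conclusion
  have hDle : D ≤ 26 * A * L^3 := by
    rw [hD]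
    have hb : (X/2) ^ (1-c) * (2*(1 + Real.log N)) ≤ (4*A) * (2*(3*L)) := by
      apply mul_le_mul hhalf (by linarith) (by linarith) (by linarith)
    have hb2 : L^2 * ((X/2) ^ (1-c) * (2*(1 + Real.log N))) ≤ L^2 * (24*A*L) := by
      have := mul_le_mul_of_nonneg_left hb (sq_nonneg L)
      calc L^2 * ((X/2) ^ (1-c) * (2*(1 + Real.log N))) ≤ L^2 * ((4*A) * (2*(3*L))) := this
        _ = L^2 * (24*A*L) := by ring
    have ha2 : L^2 * (2*τ) ≤ 2*A*L^2 := by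
      nlinarith [mul_le_mul_of_nonneg_left hτle (sq_nonneg L)]
    have hAL : A * L^2 ≤ A * L^3 := by
      have hLL : L^2 ≤ L^3 := pow_le_pow_right₀ hL1 (by norm_num)
      exact mul_le_mul_of_nonneg_left hLL hA0
    nlinarith [ha2, hb2, hAL]
  calc ∫ x in (-τ)..τ, ‖S X c x‖ ^ 2
      ≤ ∑ p ∈ F, ∑ q ∈ F, (l p * l q) * ‖J (α p - α q)‖ := hre
    _ ≤ 2 * X * D := total
    _ ≤ 2 * X * (26 * A * L^3) := by
        apply mul_le_mul_of_nonneg_left hDle (by linarith)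
    _ = 52 * (X * A) * L^3 := by ring
    _ = 52 * X ^ (2-c) * L^3 := by rw [hXX]
    _ ≤ 100 * X ^ (2-c) * L^3 := by
        have hP : (0:ℝ) ≤ X ^ (2-c) * L^3 :=
          mul_nonneg (Real.rpow_nonneg hX0.le _) (pow_nonneg (by linarith) 3)
        nlinarith [hP]

lemma S_cont (X c : ℝ) : Continuous (fun x => S X c x) := by
  unfold S
  exact continuous_finset_sum _ fun p _ => continuous_const.mul (continuous_e _)

lemma S_norm_le {c X : ℝ} (hX : 16 ≤ X) (x : ℝ) : ‖S X c x‖ ≤ 2 * X * Real.log X := by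
  have hX0 : (0:ℝ) < X := by linarith
  set F := (Finset.range (⌈X⌉₊ + 1)).filter
      (fun p : ℕ => p.Prime ∧ X / 2 < (p : ℝ) ∧ (p : ℝ) ≤ X) with hF
  have hterm : ∀ p ∈ F, ‖(Real.log p : ℂ) * e ((p:ℝ) ^ c * x)‖ ≤ Real.log X := by
    intro p hp
    rw [hF, Finset.mem_filter] at hp
    obtain ⟨-, -, h1, h2⟩ := hp
    rw [norm_mul, norm_e, mul_one, Complex.norm_real, Real.norm_eq_abs,
      abs_of_nonneg (Real.log_nonneg (by linarith : (1:ℝ) ≤ (p:ℝ)))]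
    exact Real.log_le_log (by linarith) h2
  have hcard : (F.card : ℝ) ≤ 2 * X := by
    have h1 : F.card ≤ ⌈X⌉₊ + 1 :=
      le_of_le_of_eq (Finset.card_le_card (Finset.filter_subset _ _)) (Finset.card_range _)
    have h2 : (⌈X⌉₊:ℝ) < X + 1 := Nat.ceil_lt_add_one (by linarith)
    have h3 : (F.card : ℝ) ≤ (⌈X⌉₊:ℝ) + 1 := by exact_mod_cast h1
    linarith
  calc ‖S X c x‖ ≤ ∑ p ∈ F, ‖(Real.log p : ℂ) * e ((p:ℝ) ^ c * x)‖ := norm_sum_le _ _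
    _ ≤ ∑ _p ∈ F, Real.log X := Finset.sum_le_sum hterm
    _ = (F.card : ℝ) * Real.log X := by rw [Finset.sum_const, nsmul_eq_mul]
    _ ≤ 2 * X * Real.log X := by
        have hlog0 : 0 ≤ Real.log X := Real.log_nonneg (by linarith)
        exact mul_le_mul_of_nonneg_right hcard hlog0

lemma S_L4 {c X η τ : ℝ} (hc1 : 1 < c) (hc3 : c ≤ 3) (hη : 0 < η) (hη1 : η < 1)
    (hX : 16 ≤ X) (hτ : τ = X ^ (1 - c - η)) :
    ∫ x in (-τ)..τ, ‖S X c x‖ ^ 4 ≤ 400 * X ^ (4 - c) * Real.log X ^ 5 := by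
  have hX0 : (0:ℝ) < X := by linarith
  have hτ0 : 0 ≤ τ := by rw [hτ]; positivity
  have hlog0 : (0:ℝ) ≤ Real.log X := Real.log_nonneg (by linarith)
  set M := 2 * X * Real.log X with hM
  have hM0 : 0 ≤ M := by positivity
  have hcont := S_cont X c
  have h1 : ∫ x in (-τ)..τ, ‖S X c x‖ ^ 4 ≤ ∫ x in (-τ)..τ, M^2 * ‖S X c x‖ ^ 2 := by
    apply intervalIntegral.integral_mono_on (by linarith)
    · exact ((hcont.norm.pow 4)).intervalIntegrable _ _
    · exact ((continuous_const.mul (hcont.norm.pow 2))).intervalIntegrable _ _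
    · intro x _
      have h2 := S_norm_le (c := c) hX x
      have h3 : (0:ℝ) ≤ ‖S X c x‖ := norm_nonneg _
      have hsq : ‖S X c x‖^2 ≤ M^2 := by rw [hM]; nlinarith
      calc ‖S X c x‖^4 = ‖S X c x‖^2 * ‖S X c x‖^2 := by ring
        _ ≤ M^2 * ‖S X c x‖^2 := mul_le_mul_of_nonneg_right hsq (sq_nonneg _)
  have h2 : ∫ x in (-τ)..τ, M^2 * ‖S X c x‖ ^ 2 = M^2 * ∫ x in (-τ)..τ, ‖S X c x‖ ^ 2 :=
    intervalIntegral.integral_const_mul _ _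
  have h3 := S_L2 hc1 hc3 hη hη1 hX hτ
  have h4 : M^2 * (∫ x in (-τ)..τ, ‖S X c x‖ ^ 2) ≤ M^2 * (100 * X ^ (2-c) * Real.log X ^ 3) :=
    mul_le_mul_of_nonneg_left h3 (sq_nonneg M)
  have h5 : M^2 * (100 * X ^ (2-c) * Real.log X ^ 3) = 400 * X ^ (4-c) * Real.log X ^ 5 := by
    have hXX : X^(2:ℕ) * X ^ (2-c) = X ^ (4-c) := by
      rw [← Real.rpow_natCast X 2, ← Real.rpow_add hX0, show ((2:ℕ):ℝ)+(2-c) = 4-c by push_cast; ring]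
    rw [hM]
    calc (2 * X * Real.log X)^2 * (100 * X ^ (2-c) * Real.log X ^ 3)
        = 400 * (X^(2:ℕ) * X ^ (2-c)) * Real.log X ^ 5 := by ring
      _ = 400 * X ^ (4-c) * Real.log X ^ 5 := by rw [hXX]
  linarith [h1, h2 ▸ h4.trans_eq h5]

lemma I_cont {X c : ℝ} (hX : 2 ≤ X) : Continuous (fun x => I X c x) := by
  have hg : Continuous (fun t : ℝ => (max t 1) ^ c) := by
    apply continuous_iff_continuousAt.mpr
    intro t
    exact ((continuous_id.max continuous_const).continuousAt).rpow_const
      (Or.inl (by positivity : max t 1 ≠ 0))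
  have heq : (fun x => I X c x) = fun x => ∫ t in (X / 2)..X, e ((max t 1) ^ c * x) := by
    funext x
    unfold I
    apply intervalIntegral.integral_congr
    intro t ht
    rw [Set.uIcc_of_le (by linarith : X / 2 ≤ X)] at ht
    have h1 : (1:ℝ) ≤ t := le_trans (by linarith) ht.1
    show e (t ^ c * x) = e ((max t 1) ^ c * x)
    rw [max_eq_left h1]
  rw [heq]
  apply intervalIntegral.continuous_parametric_intervalIntegral_of_continuous'
  show Continuous fun p : ℝ × ℝ => e ((max p.2 1) ^ c * p.1)
  unfold e
  exact Complex.continuous_exp.comp (continuous_const.mul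
    (Complex.continuous_ofReal.comp ((hg.comp continuous_snd).mul continuous_fst)))

lemma I_le {X c : ℝ} (hX : 0 ≤ X) (x : ℝ) : ‖I X c x‖ ≤ X := by
  have := intervalIntegral.norm_integral_le_of_norm_le_const
    (C := 1) (f := fun t : ℝ => e (t ^ c * x)) (a := X / 2) (b := X)
    (fun t _ => le_of_eq (norm_e _))
  calc ‖I X c x‖ ≤ 1 * |X - X / 2| := this
    _ = X / 2 := by rw [abs_of_nonneg (by linarith)]; ring
    _ ≤ X := by linarith

set_option maxHeartbeats 1000000 in
lemma I_decay {X c : ℝ} (hc1 : 1 < c) (hX : 2 ≤ X) {x : ℝ} (hx : x ≠ 0) :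
    ‖I X c x‖ ≤ (X/2) ^ (1-c) / |x| := by
  have ha : (0:ℝ) < X/2 := by linarith
  have hab : X/2 ≤ X := by linarith
  have hIcc : Set.uIcc (X/2) X = Set.Icc (X/2) X := Set.uIcc_of_le hab
  have hπ : (0:ℝ) < Real.pi := Real.pi_pos
  set d : ℂ := 2 * (Real.pi:ℂ) * Complex.I * (c:ℂ) * (x:ℂ) with hd
  have hd0 : d ≠ 0 := by
    rw [hd]
    refine mul_ne_zero (mul_ne_zero (mul_ne_zero (mul_ne_zero two_ne_zero ?_)
      Complex.I_ne_zero) ?_) ?_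
    · exact Complex.ofReal_ne_zero.mpr Real.pi_ne_zero
    · exact Complex.ofReal_ne_zero.mpr (by linarith)
    · exact Complex.ofReal_ne_zero.mpr hx
  set u : ℝ → ℂ := fun t => ((t ^ (1-c) : ℝ) : ℂ) / d with hu_def
  set u' : ℝ → ℂ := fun t => (((1-c) * t ^ (-c) : ℝ) : ℂ) / d with hu'_def
  set v : ℝ → ℂ := fun t => e (t ^ c * x) with hv_def
  set v' : ℝ → ℂ := fun t =>
    e (t ^ c * x) * ((2 * (Real.pi:ℂ) * Complex.I) * ((c * t ^ (c-1) * x : ℝ) : ℂ)) with hv'_def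
  have hpos : ∀ t ∈ Set.uIcc (X/2) X, 0 < t := by
    intro t ht
    rw [hIcc] at ht
    linarith [ht.1]
  have hu : ∀ t ∈ Set.uIcc (X/2) X, HasDerivAt u (u' t) t := by
    intro t ht
    have ht0 := hpos t ht
    have hr : HasDerivAt (fun s : ℝ => s ^ (1-c)) ((1-c) * t ^ (-c)) t := by
      have := Real.hasDerivAt_rpow_const (x := t) (p := 1-c) (Or.inl ht0.ne')
      rwa [show (1-c)-1 = -c by ring] at this
    exact (hr.ofReal_comp).div_const d
  have hv : ∀ t ∈ Set.uIcc (X/2) X, HasDerivAt v (v' t) t := by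
    intro t ht
    have ht0 := hpos t ht
    have hw : HasDerivAt (fun s : ℝ => s ^ c * x) (c * t ^ (c-1) * x) t :=
      (Real.hasDerivAt_rpow_const (x := t) (p := c) (Or.inl ht0.ne')).mul_const x
    have hwc : HasDerivAt (fun s : ℝ => ((s ^ c * x : ℝ) : ℂ))
        ((c * t ^ (c-1) * x : ℝ) : ℂ) t := hw.ofReal_comp
    have h2 : HasDerivAt (fun s : ℝ => (2 * (Real.pi:ℂ) * Complex.I) * ((s ^ c * x : ℝ) : ℂ))
        ((2 * (Real.pi:ℂ) * Complex.I) * ((c * t ^ (c-1) * x : ℝ) : ℂ)) t := hwc.const_mul _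
    have h3 := h2.cexp
    convert h3 using 1
    rfl
    rfl
  have hcont_negc : ContinuousOn (fun t : ℝ => t ^ (-c)) (Set.uIcc (X/2) X) := by
    intro t ht
    exact (Real.continuousAt_rpow_const t (-c) (Or.inl (hpos t ht).ne')).continuousWithinAt
  have hcont_cm1 : ContinuousOn (fun t : ℝ => t ^ (c-1)) (Set.uIcc (X/2) X) := by
    intro t ht
    exact (Real.continuousAt_rpow_const t (c-1) (Or.inl (hpos t ht).ne')).continuousWithinAt
  have hcont_c : ContinuousOn (fun t : ℝ => t ^ c) (Set.uIcc (X/2) X) := by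
    intro t ht
    exact (Real.continuousAt_rpow_const t c (Or.inl (hpos t ht).ne')).continuousWithinAt
  have hcont_v : ContinuousOn v (Set.uIcc (X/2) X) := by
    rw [hv_def]
    show ContinuousOn (fun t => Complex.exp (2 * (Real.pi:ℂ) * Complex.I * ((t ^ c * x : ℝ):ℂ))) _
    exact Complex.continuous_exp.comp_continuousOn
      (continuousOn_const.mul ((Complex.continuous_ofReal.comp_continuousOn
        (hcont_c.mul continuousOn_const))))
  have hu'int : IntervalIntegrable u' volume (X/2) X := by
    apply ContinuousOn.intervalIntegrable
    rw [hu'_def]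
    exact ((Complex.continuous_ofReal.comp_continuousOn
      (continuousOn_const.mul hcont_negc))).div_const d
  have hv'int : IntervalIntegrable v' volume (X/2) X := by
    apply ContinuousOn.intervalIntegrable
    rw [hv'_def]
    exact hcont_v.mul (continuousOn_const.mul ((Complex.continuous_ofReal.comp_continuousOn
      ((continuousOn_const.mul hcont_cm1).mul continuousOn_const))))
  have hIBP := intervalIntegral.integral_mul_deriv_eq_deriv_mul hu hv hu'int hv'int
  have hprod : Set.EqOn (fun t => u t * v' t) v (Set.uIcc (X/2) X) := by
    intro t ht
    have ht0 := hpos t ht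
    have hmul : (t ^ (1-c) : ℝ) * (t ^ (c-1)) = 1 := by
      rw [← Real.rpow_add ht0]
      norm_num
    have e1 : ((t ^ (1-c) : ℝ) : ℂ) * ((t ^ (c-1) : ℝ) : ℂ) = 1 := by
      rw [← Complex.ofReal_mul, hmul, Complex.ofReal_one]
    show u t * v' t = v t
    rw [hu_def, hv'_def, hv_def]
    have expand : ((t ^ (1-c) : ℝ) : ℂ) / d *
        (e (t ^ c * x) * ((2 * (Real.pi:ℂ) * Complex.I) * ((c * t ^ (c-1) * x : ℝ) : ℂ))) =
        e (t ^ c * x) * (((t ^ (1-c) : ℝ) : ℂ) * ((t ^ (c-1) : ℝ) : ℂ)) * (d / d) := by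
      rw [hd]
      push_cast
      ring
    rw [expand, div_self hd0, mul_one, e1, mul_one]
  have hIeq : I X c x = u X * v X - u (X/2) * v (X/2) - ∫ t in (X/2)..X, u' t * v t := by
    have h1 : I X c x = ∫ t in (X/2)..X, u t * v' t := by
      unfold I
      exact (intervalIntegral.integral_congr hprod).symm
    rw [h1, hIBP]
  -- norms
  have hdnorm : ‖d‖ = 2 * Real.pi * c * |x| := by
    rw [hd]
    simp only [norm_mul, Complex.norm_real, Real.norm_eq_abs, Complex.norm_I]
    rw [Complex.norm_ofNat]
    rw [abs_of_pos hπ, abs_of_pos (by linarith : (0:ℝ) < c)]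
    ring
  have hD : (0:ℝ) < 2 * Real.pi * c * |x| := by
    have : 0 < |x| := abs_pos.mpr hx
    positivity
  have hvnorm : ∀ t : ℝ, ‖v t‖ = 1 := fun t => norm_e _
  have hunorm : ∀ t : ℝ, 0 < t → ‖u t‖ = t ^ (1-c) / (2 * Real.pi * c * |x|) := by
    intro t ht0
    rw [hu_def]
    simp only [norm_div, Complex.norm_real, Real.norm_eq_abs, hdnorm]
    rw [abs_of_pos (Real.rpow_pos_of_pos ht0 _)]
  have htail : ‖∫ t in (X/2)..X, u' t * v t‖ ≤
      (X/2) * ((c-1) * (X/2) ^ (-c) / (2 * Real.pi * c * |x|)) := by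
    have hbd : ∀ t ∈ Set.uIcc (X/2) X,
        ‖u' t * v t‖ ≤ (c-1) * (X/2) ^ (-c) / (2 * Real.pi * c * |x|) := by
      intro t ht
      have ht0 := hpos t ht
      have hta : X/2 ≤ t := by rw [hIcc] at ht; exact ht.1
      have hmono : t ^ (-c) ≤ (X/2) ^ (-c) := by
        rw [Real.rpow_neg ht0.le, Real.rpow_neg ha.le]
        have h1 : (X/2) ^ c ≤ t ^ c := Real.rpow_le_rpow ha.le hta (by linarith)
        exact inv_anti₀ (Real.rpow_pos_of_pos ha c) h1
      rw [norm_mul, hvnorm, mul_one, hu'_def]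
      simp only [norm_div, Complex.norm_real, Real.norm_eq_abs, hdnorm]
      rw [abs_mul, abs_of_neg (by linarith : (1:ℝ)-c < 0),
        abs_of_pos (Real.rpow_pos_of_pos ht0 _)]
      have hc0 : (0:ℝ) ≤ c - 1 := by linarith
      have hstep : -(1-c) * t ^ (-c) ≤ (c-1) * (X/2) ^ (-c) := by
        calc -(1-c) * t ^ (-c) = (c-1) * t ^ (-c) := by ring
          _ ≤ (c-1) * (X/2) ^ (-c) := mul_le_mul_of_nonneg_left hmono hc0
      exact div_le_div_of_nonneg_right hstep hD.le
    have := intervalIntegral.norm_integral_le_of_norm_le_const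
      (C := (c-1) * (X/2) ^ (-c) / (2 * Real.pi * c * |x|))
      (f := fun t => u' t * v t) (a := X/2) (b := X)
      (fun t ht => hbd t (Set.uIoc_subset_uIcc ht))
    calc ‖∫ t in (X/2)..X, u' t * v t‖
        ≤ (c-1) * (X/2) ^ (-c) / (2 * Real.pi * c * |x|) * |X - X/2| := this
      _ = (X/2) * ((c-1) * (X/2) ^ (-c) / (2 * Real.pi * c * |x|)) := by
          rw [abs_of_nonneg (by linarith : (0:ℝ) ≤ X - X/2)]
          ring
  -- combine
  have hXle : X ^ (1-c) ≤ (X/2) ^ (1-c) := by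
    rw [show (1-c) = -(c-1) by ring, Real.rpow_neg (by linarith : (0:ℝ) ≤ X),
      Real.rpow_neg ha.le]
    have h1 : (X/2) ^ (c-1) ≤ X ^ (c-1) := Real.rpow_le_rpow ha.le hab (by linarith)
    exact inv_anti₀ (Real.rpow_pos_of_pos ha _) h1
  have haac : (X/2) * (X/2) ^ (-c) = (X/2) ^ (1-c) := by
    nth_rewrite 1 [← Real.rpow_one (X/2)]
    rw [← Real.rpow_add ha, show (1:ℝ) + -c = 1 - c by ring]
  have hbound : ‖I X c x‖ ≤ (X ^ (1-c) + (X/2) ^ (1-c) + (c-1) * (X/2) ^ (1-c)) /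
      (2 * Real.pi * c * |x|) := by
    rw [hIeq]
    have h1 : ‖u X * v X - u (X/2) * v (X/2) - ∫ t in (X/2)..X, u' t * v t‖ ≤
        ‖u X‖ * ‖v X‖ + ‖u (X/2)‖ * ‖v (X/2)‖ + ‖∫ t in (X/2)..X, u' t * v t‖ := by
      calc ‖u X * v X - u (X/2) * v (X/2) - ∫ t in (X/2)..X, u' t * v t‖
          ≤ ‖u X * v X - u (X/2) * v (X/2)‖ + ‖∫ t in (X/2)..X, u' t * v t‖ :=
            norm_sub_le _ _
        _ ≤ ‖u X * v X‖ + ‖u (X/2) * v (X/2)‖ + ‖∫ t in (X/2)..X, u' t * v t‖ := by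
            have := norm_sub_le (u X * v X) (u (X/2) * v (X/2))
            linarith
        _ = ‖u X‖ * ‖v X‖ + ‖u (X/2)‖ * ‖v (X/2)‖ + ‖∫ t in (X/2)..X, u' t * v t‖ := by
            rw [norm_mul, norm_mul]
    have h2 : ‖u X‖ * ‖v X‖ = X ^ (1-c) / (2 * Real.pi * c * |x|) := by
      rw [hvnorm, mul_one, hunorm X (by linarith)]
    have h3 : ‖u (X/2)‖ * ‖v (X/2)‖ = (X/2) ^ (1-c) / (2 * Real.pi * c * |x|) := by
      rw [hvnorm, mul_one, hunorm (X/2) ha]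
    have h4 : (X/2) * ((c-1) * (X/2) ^ (-c) / (2 * Real.pi * c * |x|)) =
        (c-1) * (X/2) ^ (1-c) / (2 * Real.pi * c * |x|) := by
      rw [mul_div_assoc']
      congr 1
      rw [show (X/2) * ((c-1) * (X/2) ^ (-c)) = (c-1) * ((X/2) * (X/2) ^ (-c)) by ring, haac]
    rw [h2, h3] at h1
    rw [h4] at htail
    calc ‖u X * v X - u (X/2) * v (X/2) - ∫ t in (X/2)..X, u' t * v t‖
        ≤ X ^ (1-c) / (2 * Real.pi * c * |x|) + (X/2) ^ (1-c) / (2 * Real.pi * c * |x|) +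
          (c-1) * (X/2) ^ (1-c) / (2 * Real.pi * c * |x|) := by linarith
      _ = (X ^ (1-c) + (X/2) ^ (1-c) + (c-1) * (X/2) ^ (1-c)) / (2 * Real.pi * c * |x|) := by
          ring
  have hfinal : (X ^ (1-c) + (X/2) ^ (1-c) + (c-1) * (X/2) ^ (1-c)) /
      (2 * Real.pi * c * |x|) ≤ (X/2) ^ (1-c) / |x| := by
    have hP : (0:ℝ) < (X/2) ^ (1-c) := Real.rpow_pos_of_pos ha _
    have hQ : (0:ℝ) < |x| := abs_pos.mpr hx
    have hnum : X ^ (1-c) + (X/2) ^ (1-c) + (c-1) * (X/2) ^ (1-c) ≤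
        (c+1) * (X/2) ^ (1-c) := by nlinarith
    have hden : (c+1) ≤ 2 * Real.pi * c := by nlinarith [Real.pi_gt_three]
    rw [div_le_div_iff₀ hD hQ]
    have hXp : (0:ℝ) ≤ X ^ (1-c) := Real.rpow_nonneg (by linarith) _
    nlinarith [mul_le_mul_of_nonneg_left hden hP.le, hnum, hQ,
      mul_le_mul_of_nonneg_right hnum hQ.le,
      mul_le_mul_of_nonneg_right (mul_le_mul_of_nonneg_left hden hP.le) hQ.le]
  exact hbound.trans hfinal

set_option maxHeartbeats 1000000 in
open intervalIntegral in
lemma I_L4 {c X η τ : ℝ} (hc1 : 1 < c) (hc3 : c ≤ 3) (hη : 0 < η) (hη1 : η < 1)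
    (hX : 16 ≤ X) (hτ : τ = X ^ (1 - c - η)) :
    ∫ x in (-τ)..τ, ‖I X c x‖ ^ 4 ≤ 200 * X ^ (4 - c) := by
  have hX0 : (0:ℝ) < X := by linarith
  have hX1 : (1:ℝ) ≤ X := by linarith
  have hX2 : (2:ℝ) ≤ X := by linarith
  set δ := X ^ (-c) with hδdef
  have hδ0 : 0 < δ := Real.rpow_pos_of_pos hX0 _
  have hτ0 : 0 < τ := by rw [hτ]; exact Real.rpow_pos_of_pos hX0 _
  have hδτ : δ ≤ τ := by
    rw [hδdef, hτ]
    exact Real.rpow_le_rpow_of_exponent_le hX1 (by linarith)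
  set f : ℝ → ℝ := fun x => ‖I X c x‖ ^ 4 with hfdef
  have hfc : Continuous f := ((I_cont hX2).norm.pow 4)
  have hfint : ∀ s t : ℝ, IntervalIntegrable f volume s t := fun s t =>
    hfc.intervalIntegrable _ _
  have hf0 : ∀ x, 0 ≤ f x := fun x => by positivity
  -- pointwise decay bound
  set B := ((X/2) ^ (1-c)) ^ (4:ℕ) with hBdef
  have hB0 : 0 ≤ B := by positivity
  have hpt : ∀ x : ℝ, x ≠ 0 → f x ≤ B * x ^ (-4:ℤ) := by
    intro x hx0
    have h1 : ‖I X c x‖ ^ 4 ≤ ((X/2) ^ (1-c) / |x|) ^ 4 :=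
      pow_le_pow_left₀ (norm_nonneg _) (I_decay hc1 hX2 hx0) 4
    have habs : |x| ^ (4:ℕ) = x ^ (4:ℕ) := by
      rw [pow_abs, abs_of_nonneg (by positivity)]
    have hz : x ^ (-4:ℤ) = (x ^ (4:ℕ))⁻¹ := by
      rw [zpow_neg]; norm_cast
    calc f x ≤ ((X/2) ^ (1-c) / |x|) ^ 4 := h1
      _ = B * x ^ (-4:ℤ) := by rw [div_pow, hBdef, habs, hz, div_eq_mul_inv]
  -- split
  have hsplit : (∫ x in (-τ)..τ, f x) =
      (∫ x in (-τ)..(-δ), f x) + (∫ x in (-δ)..δ, f x) + ∫ x in δ..τ, f x := by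
    have h1 := intervalIntegral.integral_add_adjacent_intervals
      (a := -τ) (b := -δ) (c := δ) (hfint _ _) (hfint _ _)
    have h2 := intervalIntegral.integral_add_adjacent_intervals
      (a := -τ) (b := δ) (c := τ) (hfint _ _) (hfint _ _)
    rw [← h2, ← h1]
  -- middle piece
  have hmid : (∫ x in (-δ)..δ, f x) ≤ 2 * δ * X ^ (4:ℕ) := by
    have hb : ∀ x ∈ Set.Icc (-δ) δ, f x ≤ X ^ (4:ℕ) := by
      intro x _
      exact pow_le_pow_left₀ (norm_nonneg _) (I_le (by linarith) x) 4
    calc (∫ x in (-δ)..δ, f x) ≤ ∫ _x in (-δ)..δ, X ^ (4:ℕ) :=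
          intervalIntegral.integral_mono_on (by linarith) (hfint _ _)
            intervalIntegrable_const hb
      _ = (δ - (-δ)) • X ^ (4:ℕ) := intervalIntegral.integral_const _
      _ = 2 * δ * X ^ (4:ℕ) := by rw [smul_eq_mul]; ring
  -- right tail
  have hzint : ∀ s t : ℝ, (0:ℝ) ∉ Set.uIcc s t →
      IntervalIntegrable (fun x : ℝ => B * x ^ (-4:ℤ)) volume s t := by
    intro s t h0
    exact (intervalIntegrable_zpow (Or.inr h0)).const_mul B
  have hright : (∫ x in δ..τ, f x) ≤ B * (δ ^ (-3:ℤ) - τ ^ (-3:ℤ)) / 3 := by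
    have h0 : (0:ℝ) ∉ Set.uIcc δ τ := by
      rw [Set.uIcc_of_le hδτ]
      intro h
      exact absurd h.1 (not_le.mpr hδ0)
    have hmono : (∫ x in δ..τ, f x) ≤ ∫ x in δ..τ, B * x ^ (-4:ℤ) := by
      apply intervalIntegral.integral_mono_on hδτ (hfint _ _) (hzint _ _ h0)
      intro x hx
      exact hpt x (by intro h; rw [h] at hx; exact absurd hx.1 (not_le.mpr hδ0))
    have hval : (∫ x in δ..τ, (x:ℝ) ^ (-4:ℤ)) = (τ ^ (-3:ℤ) - δ ^ (-3:ℤ)) / ((-3:ℤ):ℝ) := by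
      rw [integral_zpow (Or.inr ⟨by norm_num, h0⟩)]
      norm_num
    calc (∫ x in δ..τ, f x) ≤ ∫ x in δ..τ, B * x ^ (-4:ℤ) := hmono
      _ = B * ∫ x in δ..τ, (x:ℝ) ^ (-4:ℤ) := intervalIntegral.integral_const_mul _ _
      _ = B * ((τ ^ (-3:ℤ) - δ ^ (-3:ℤ)) / ((-3:ℤ):ℝ)) := by rw [hval]
      _ = B * (δ ^ (-3:ℤ) - τ ^ (-3:ℤ)) / 3 := by push_cast; ring
  -- left tail
  have hleft : (∫ x in (-τ)..(-δ), f x) ≤ B * (δ ^ (-3:ℤ) - τ ^ (-3:ℤ)) / 3 := by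
    have hle : -τ ≤ -δ := by linarith
    have h0 : (0:ℝ) ∉ Set.uIcc (-τ) (-δ) := by
      rw [Set.uIcc_of_le hle]
      intro h
      exact absurd h.2 (not_le.mpr (by linarith))
    have hmono : (∫ x in (-τ)..(-δ), f x) ≤ ∫ x in (-τ)..(-δ), B * x ^ (-4:ℤ) := by
      apply intervalIntegral.integral_mono_on hle (hfint _ _) (hzint _ _ h0)
      intro x hx
      exact hpt x (by intro h; rw [h] at hx; exact absurd hx.2 (not_le.mpr (by linarith)))
    have hodd : Odd (-3:ℤ) := by decide
    have hval : (∫ x in (-τ)..(-δ), (x:ℝ) ^ (-4:ℤ)) =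
        ((-δ) ^ (-3:ℤ) - (-τ) ^ (-3:ℤ)) / ((-3:ℤ):ℝ) := by
      rw [integral_zpow (Or.inr ⟨by norm_num, h0⟩)]
      norm_num
    have hneg : ((-δ:ℝ)) ^ (-3:ℤ) = -(δ ^ (-3:ℤ)) := hodd.neg_zpow δ
    have hneg2 : ((-τ:ℝ)) ^ (-3:ℤ) = -(τ ^ (-3:ℤ)) := hodd.neg_zpow τ
    calc (∫ x in (-τ)..(-δ), f x) ≤ ∫ x in (-τ)..(-δ), B * x ^ (-4:ℤ) := hmono
      _ = B * ∫ x in (-τ)..(-δ), (x:ℝ) ^ (-4:ℤ) := intervalIntegral.integral_const_mul _ _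
      _ = B * (((-δ) ^ (-3:ℤ) - (-τ) ^ (-3:ℤ)) / ((-3:ℤ):ℝ)) := by rw [hval]
      _ = B * (δ ^ (-3:ℤ) - τ ^ (-3:ℤ)) / 3 := by rw [hneg, hneg2]; push_cast; ring
  -- numerics
  have hτ3 : (0:ℝ) < τ ^ (-3:ℤ) := by positivity
  have hδ3 : δ ^ (-3:ℤ) = X ^ (3*c) := by
    have h1 : δ ^ (-3:ℤ) = δ ^ ((-3:ℤ):ℝ) := (Real.rpow_intCast δ (-3)).symm
    rw [h1, hδdef, ← Real.rpow_mul hX0.le]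
    norm_num
    rw [show c * 3 = 3 * c by ring]
  have hBle : B ≤ 256 * X ^ ((1-c) * 4) := by
    have hhalf : (X/2) ^ (1-c) ≤ 4 * X ^ (1-c) := by
      have e1 : (X/2) ^ (1-c) = X ^ (1-c) / 2 ^ (1-c) := Real.div_rpow hX0.le (by norm_num) _
      have e2 : (2:ℝ) ^ (1-c) = ((2:ℝ) ^ (c-1))⁻¹ := by
        rw [show (1-c) = -(c-1) by ring, Real.rpow_neg (by norm_num : (0:ℝ) ≤ 2)]
      have e3 : (2:ℝ) ^ (c-1) ≤ 4 := by
        have h4 : (2:ℝ) ^ (c-1) ≤ (2:ℝ) ^ ((2:ℕ):ℝ) :=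
          Real.rpow_le_rpow_of_exponent_le (by norm_num) (by push_cast; linarith)
        rw [Real.rpow_natCast] at h4
        norm_num at h4
        exact h4
      have hA0 : (0:ℝ) ≤ X ^ (1-c) := Real.rpow_nonneg hX0.le _
      rw [e1, e2, div_eq_mul_inv, inv_inv]
      nlinarith
    have h2 : B ≤ (4 * X ^ (1-c)) ^ (4:ℕ) := by
      rw [hBdef]
      exact pow_le_pow_left₀ (Real.rpow_nonneg (by linarith) _) hhalf 4
    have h3 : (4 * X ^ (1-c)) ^ (4:ℕ) = 256 * (X ^ (1-c)) ^ (4:ℕ) := by ring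
    have h4 : (X ^ (1-c)) ^ (4:ℕ) = X ^ ((1-c) * 4) := by
      rw [← Real.rpow_natCast (X ^ (1-c)) 4, ← Real.rpow_mul hX0.le]
      norm_num
    calc B ≤ (4 * X ^ (1-c)) ^ (4:ℕ) := h2
      _ = 256 * (X ^ (1-c)) ^ (4:ℕ) := h3
      _ = 256 * X ^ ((1-c) * 4) := by rw [h4]
  have hcomb1 : X ^ ((1-c)*4) * X ^ (3*c) = X ^ (4-c) := by
    rw [← Real.rpow_add hX0, show (1-c)*4 + 3*c = 4-c by ring]
  have hcomb2 : δ * X ^ (4:ℕ) = X ^ (4-c) := by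
    rw [hδdef, ← Real.rpow_natCast X 4, ← Real.rpow_add hX0,
      show -c + ((4:ℕ):ℝ) = 4-c by push_cast; ring]
  have htb : B * (δ ^ (-3:ℤ) - τ ^ (-3:ℤ)) / 3 ≤ 86 * X ^ (4-c) := by
    have h1 : B * (δ ^ (-3:ℤ) - τ ^ (-3:ℤ)) ≤ B * δ ^ (-3:ℤ) := by nlinarith
    have h2 : B * δ ^ (-3:ℤ) ≤ 256 * (X ^ ((1-c)*4) * X ^ (3*c)) := by
      rw [hδ3]
      have := Real.rpow_nonneg hX0.le (3*c)
      nlinarith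
    rw [hcomb1] at h2
    have hXp : (0:ℝ) ≤ X ^ (4-c) := Real.rpow_nonneg hX0.le _
    nlinarith [h1, h2, hXp, hτ3, hB0]
  have hmid2 : (∫ x in (-δ)..δ, f x) ≤ 2 * X ^ (4-c) := by
    calc (∫ x in (-δ)..δ, f x) ≤ 2 * δ * X ^ (4:ℕ) := hmid
      _ = 2 * X ^ (4-c) := by rw [mul_assoc, hcomb2]
  have hXp : (0:ℝ) ≤ X ^ (4-c) := Real.rpow_nonneg hX0.le _
  rw [hsplit]
  have := hleft
  have := hright
  nlinarith [hleft, hright, htb, hmid2]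

/-- Lemma 2.9: for `1 < c < 37/18`, `c ≠ 2`, sufficiently small `η > 0`,
sufficiently large `X`, with `τ = X^{1−c−η}`, one has
`∫_{−τ}^{τ} |S(x)|⁴ dx ≪_{c,η} X^{4−c} (log X)⁵` and
`∫_{−τ}^{τ} |I(x)|⁴ dx ≪_{c,η} X^{4−c} (log X)⁵`. -/
theorem stmt11 (c : ℝ) (hc1 : 1 < c) (hc2 : c < 37 / 18) (hc3 : c ≠ 2) :
    ∃ η₀ > 0, ∀ η : ℝ, 0 < η → η < η₀ →
    ∃ C > 0, ∃ X₀ : ℝ, ∀ X ≥ X₀, ∀ τ : ℝ, τ = X ^ (1 - c - η) →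
      (∫ x in (-τ)..τ, ‖S X c x‖ ^ 4) ≤ C * X ^ (4 - c) * (Real.log X) ^ 5 ∧
      (∫ x in (-τ)..τ, ‖I X c x‖ ^ 4) ≤ C * X ^ (4 - c) * (Real.log X) ^ 5 := by
  refine ⟨1/2, by norm_num, fun η hη hη2 => ⟨1000, by norm_num, 16, fun X hX τ hτ => ?_⟩⟩
  have hc3 : c ≤ 3 := by linarith
  have hη1 : η < 1 := by linarith
  have hX0 : (0:ℝ) < X := by linarith
  have hlog : 1 ≤ Real.log X := by
    rw [Real.le_log_iff_exp_le hX0]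
    calc Real.exp 1 ≤ 3 := by nlinarith [Real.exp_one_lt_d9]
      _ ≤ X := by linarith
  have hXp : (0:ℝ) ≤ X ^ (4 - c) := Real.rpow_nonneg hX0.le _
  have hlp : (1:ℝ) ≤ Real.log X ^ 5 := one_le_pow₀ hlog
  constructor
  · have h := S_L4 hc1 hc3 hη hη1 hX hτ
    have h2 : 400 * X ^ (4-c) * Real.log X ^ 5 ≤ 1000 * X ^ (4-c) * Real.log X ^ 5 := by
      nlinarith [mul_nonneg hXp (le_trans zero_le_one hlp)]
    linarith
  · have h := I_L4 hc1 hc3 hη hη1 hX hτ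
    have h2 : 200 * X ^ (4-c) ≤ 1000 * X ^ (4-c) * Real.log X ^ 5 := by
      nlinarith [mul_nonneg hXp (le_trans zero_le_one hlp)]
    linarith
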